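/- Define C_{2/3} : [0,1]² → [0,1] by C_{2/3}(x,y) = x if 0 ≤ x ≤ (2/3)y; C_{2/3}(x,y) = (2/3)y if (2/3)y ≤ x ≤ 2/3; and C_{2/3}(x,y) = xy if 2/3 ≤ x ≤ 1. Then ∫₀¹∫₀¹ |C_{2/3}(x,y) − C_{2/3}(y,x)| dx dy = 10/243 and (∫₀¹∫₀¹ |C_{2/3}(x,y) − C_{2/3}(y,x)|² dx dy)^{1/2} = (2/81)·√(74/15). -/

import Mathlib

/-!
For fixed `x`, the integrand `y ↦ |C(x, y) - C(y, x)|` is affine between consecutive points of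
`0, 2x/3, x, 3x/2, 2/3, 1` (those lying in `[0, 1]`); their order changes only at `x = 4/9` and
`x = 2/3`. Hence both inner integrals, of `|·|` and of `|·|²`, are polynomials in `x` on each of
`[0, 4/9]`, `[4/9, 2/3]`, `[2/3, 1]`, and the outer integrals are integrals of polynomials.
-/

open intervalIntegral Set

/-- The Marshall copula `C_{2/3}`. -/
noncomputable def C23 : ℝ → ℝ → ℝ := fun x y =>
  if x ≤ (2 / 3) * y then x else if x ≤ 2 / 3 then (2 / 3) * y else x * y

-- `integral_const_mul` does not fire under `simp` when the integrand is `c * x` itself.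
theorem integral_const_mul_id (a b c : ℝ) : ∫ x in a..b, c * x = c * ((b ^ 2 - a ^ 2) / 2) := by
  rw [integral_const_mul, integral_id]

section

variable {E : Type*} [NormedAddCommGroup E] [NormedSpace ℝ E]

def HasIntervalIntegral (f : ℝ → E) (a b : ℝ) (v : E) : Prop :=
  IntervalIntegrable f MeasureTheory.volume a b ∧ ∫ x in a..b, f x = v

namespace HasIntervalIntegral

variable {f g : ℝ → E} {a b c : ℝ} {v w : E}

theorem trans (h₁ : HasIntervalIntegral f a b v) (h₂ : HasIntervalIntegral f b c w) :
    HasIntervalIntegral f a c (v + w) :=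
  ⟨h₁.1.trans h₂.1, by rw [← integral_add_adjacent_intervals h₁.1 h₂.1, h₁.2, h₂.2]⟩

theorem of_eqOn_Icc (hab : a ≤ b) (hg : ContinuousOn g (Icc a b)) (h : EqOn f g (Icc a b)) :
    HasIntervalIntegral f a b (∫ x in a..b, g x) := by
  rw [← uIcc_of_le hab] at hg h
  exact ⟨(hg.congr h).intervalIntegrable, integral_congr h⟩

end HasIntervalIntegral

end

open HasIntervalIntegral

/-- `μ_p(C)` is the `L^p` norm of `absAsymm C` on the unit square. -/
def absAsymm (C : ℝ → ℝ → ℝ) (x y : ℝ) : ℝ := |C x y - C y x|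

namespace C23

theorem absAsymm_eqOn_of_le_four_ninths {x : ℝ} (h₀ : 0 ≤ x) (h₁ : x ≤ 4 / 9) :
    EqOn (absAsymm C23 x) (fun y => y / 3) (Icc 0 (2 / 3 * x)) ∧
    EqOn (absAsymm C23 x) (fun y => 2 / 3 * (x - y)) (Icc (2 / 3 * x) x) ∧
    EqOn (absAsymm C23 x) (fun y => 2 / 3 * (y - x)) (Icc x (3 / 2 * x)) ∧
    EqOn (absAsymm C23 x) (fun _ => x / 3) (Icc (3 / 2 * x) (2 / 3)) ∧
    EqOn (absAsymm C23 x) (fun y => x * (1 - y)) (Icc (2 / 3) 1) := by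
  refine ⟨?_, ?_, ?_, ?_, ?_⟩ <;> rintro y ⟨hy₀, hy₁⟩ <;> simp only [absAsymm, C23] <;>
    rw [abs_eq (by nlinarith)] <;> split_ifs <;> first | (left; nlinarith) | (right; nlinarith)

theorem absAsymm_eqOn_of_four_ninths_le {x : ℝ} (h₁ : 4 / 9 ≤ x) (h₂ : x ≤ 2 / 3) :
    EqOn (absAsymm C23 x) (fun y => y / 3) (Icc 0 (2 / 3 * x)) ∧
    EqOn (absAsymm C23 x) (fun y => 2 / 3 * (x - y)) (Icc (2 / 3 * x) x) ∧
    EqOn (absAsymm C23 x) (fun y => 2 / 3 * (y - x)) (Icc x (2 / 3)) ∧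
    EqOn (absAsymm C23 x) (fun y => (2 / 3 - x) * y) (Icc (2 / 3) (3 / 2 * x)) ∧
    EqOn (absAsymm C23 x) (fun y => x * (1 - y)) (Icc (3 / 2 * x) 1) := by
  refine ⟨?_, ?_, ?_, ?_, ?_⟩ <;> rintro y ⟨hy₀, hy₁⟩ <;> simp only [absAsymm, C23] <;>
    rw [abs_eq (by nlinarith)] <;> split_ifs <;> first | (left; nlinarith) | (right; nlinarith)

theorem absAsymm_eqOn_of_two_thirds_le {x : ℝ} (h₂ : 2 / 3 ≤ x) (h₃ : x ≤ 1) :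
    EqOn (absAsymm C23 x) (fun y => (1 - x) * y) (Icc 0 (2 / 3 * x)) ∧
    EqOn (absAsymm C23 x) (fun y => x * (2 / 3 - y)) (Icc (2 / 3 * x) (2 / 3)) ∧
    EqOn (absAsymm C23 x) (fun _ => 0) (Icc (2 / 3) 1) := by
  refine ⟨?_, ?_, ?_⟩ <;> rintro y ⟨hy₀, hy₁⟩ <;> simp only [absAsymm, C23] <;>
    rw [abs_eq (by nlinarith)] <;> split_ifs <;> first | (left; nlinarith) | (right; nlinarith)

section

variable {φ : ℝ → ℝ} {x : ℝ}

theorem hasIntervalIntegral_comp_absAsymm_of_le_four_ninths (hφ : Continuous φ) (h₀ : 0 ≤ x)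
    (h₁ : x ≤ 4 / 9) :
    HasIntervalIntegral (fun y => φ (absAsymm C23 x y)) 0 1
      ((∫ y in 0..2 / 3 * x, φ (y / 3)) + (∫ y in 2 / 3 * x..x, φ (2 / 3 * (x - y))) +
        (∫ y in x..3 / 2 * x, φ (2 / 3 * (y - x))) + (∫ _ in 3 / 2 * x..2 / 3, φ (x / 3)) +
        ∫ y in 2 / 3..1, φ (x * (1 - y))) := by
  obtain ⟨e₁, e₂, e₃, e₄, e₅⟩ := absAsymm_eqOn_of_le_four_ninths h₀ h₁
  exact ((((of_eqOn_Icc (by linarith) (by fun_prop) (e₁.comp_left (g := φ))).trans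
    (of_eqOn_Icc (by linarith) (by fun_prop) (e₂.comp_left (g := φ)))).trans
    (of_eqOn_Icc (by linarith) (by fun_prop) (e₃.comp_left (g := φ)))).trans
    (of_eqOn_Icc (by linarith) (by fun_prop) (e₄.comp_left (g := φ)))).trans
    (of_eqOn_Icc (by norm_num) (by fun_prop) (e₅.comp_left (g := φ)))

theorem hasIntervalIntegral_comp_absAsymm_of_four_ninths_le (hφ : Continuous φ)
    (h₁ : 4 / 9 ≤ x) (h₂ : x ≤ 2 / 3) :
    HasIntervalIntegral (fun y => φ (absAsymm C23 x y)) 0 1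
      ((∫ y in 0..2 / 3 * x, φ (y / 3)) + (∫ y in 2 / 3 * x..x, φ (2 / 3 * (x - y))) +
        (∫ y in x..2 / 3, φ (2 / 3 * (y - x))) +
        (∫ y in 2 / 3..3 / 2 * x, φ ((2 / 3 - x) * y)) + ∫ y in 3 / 2 * x..1, φ (x * (1 - y))) := by
  obtain ⟨e₁, e₂, e₃, e₄, e₅⟩ := absAsymm_eqOn_of_four_ninths_le h₁ h₂
  exact ((((of_eqOn_Icc (by linarith) (by fun_prop) (e₁.comp_left (g := φ))).trans
    (of_eqOn_Icc (by linarith) (by fun_prop) (e₂.comp_left (g := φ)))).trans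
    (of_eqOn_Icc h₂ (by fun_prop) (e₃.comp_left (g := φ)))).trans
    (of_eqOn_Icc (by linarith) (by fun_prop) (e₄.comp_left (g := φ)))).trans
    (of_eqOn_Icc (by linarith) (by fun_prop) (e₅.comp_left (g := φ)))

theorem hasIntervalIntegral_comp_absAsymm_of_two_thirds_le (hφ : Continuous φ)
    (h₂ : 2 / 3 ≤ x) (h₃ : x ≤ 1) :
    HasIntervalIntegral (fun y => φ (absAsymm C23 x y)) 0 1
      ((∫ y in 0..2 / 3 * x, φ ((1 - x) * y)) +
        (∫ y in 2 / 3 * x..2 / 3, φ (x * (2 / 3 - y))) + ∫ _ in 2 / 3..1, φ 0) := by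
  obtain ⟨e₁, e₂, e₃⟩ := absAsymm_eqOn_of_two_thirds_le h₂ h₃
  exact ((of_eqOn_Icc (by linarith) (by fun_prop) (e₁.comp_left (g := φ))).trans
    (of_eqOn_Icc (by linarith) (by fun_prop) (e₂.comp_left (g := φ)))).trans
    (of_eqOn_Icc (by norm_num) (by fun_prop) (e₃.comp_left (g := φ)))

end

theorem integral_absAsymm_of_le_four_ninths {x : ℝ} (h₀ : 0 ≤ x) (h₁ : x ≤ 4 / 9) :
    ∫ y in 0..1, absAsymm C23 x y = 5 / 18 * x - 11 / 36 * x ^ 2 ∧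
    ∫ y in 0..1, absAsymm C23 x y ^ 2 = 7 / 81 * x ^ 2 - 32 / 243 * x ^ 3 := by
  refine ⟨(hasIntervalIntegral_comp_absAsymm_of_le_four_ninths continuous_id h₀ h₁).2.trans ?_,
    (hasIntervalIntegral_comp_absAsymm_of_le_four_ninths (continuous_pow 2) h₀ h₁).2.trans ?_⟩ <;>
  simp (disch := exact (Continuous.intervalIntegrable (by fun_prop) _ _)) only [sub_sq, mul_pow,
    div_pow, mul_sub, integral_add, integral_sub, integral_const_mul_id, integral_const_mul,
    integral_mul_const, integral_div, integral_const, integral_pow, integral_id, smul_eq_mul,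
    id] <;>
  ring

theorem integral_absAsymm_of_four_ninths_le {x : ℝ} (h₁ : 4 / 9 ≤ x) (h₂ : x ≤ 2 / 3) :
    ∫ y in 0..1, absAsymm C23 x y = 5 / 18 * x - 11 / 36 * x ^ 2 ∧
    ∫ y in 0..1, absAsymm C23 x y ^ 2 =
      -16 / 243 * x + 43 / 81 * x ^ 2 - 275 / 243 * x ^ 3 + 3 / 4 * x ^ 4 := by
  refine ⟨(hasIntervalIntegral_comp_absAsymm_of_four_ninths_le continuous_id h₁ h₂).2.trans ?_,
    (hasIntervalIntegral_comp_absAsymm_of_four_ninths_le (continuous_pow 2) h₁ h₂).2.trans ?_⟩ <;>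
  simp (disch := exact (Continuous.intervalIntegrable (by fun_prop) _ _)) only [sub_sq, mul_pow,
    div_pow, mul_sub, integral_add, integral_sub, integral_const_mul_id, integral_const_mul,
    integral_mul_const, integral_div, integral_const, integral_pow, integral_id, smul_eq_mul,
    id] <;>
  ring

theorem integral_absAsymm_of_two_thirds_le {x : ℝ} (h₂ : 2 / 3 ≤ x) (h₃ : x ≤ 1) :
    ∫ y in 0..1, absAsymm C23 x y = 2 / 9 * x - 2 / 9 * x ^ 2 ∧
    ∫ y in 0..1, absAsymm C23 x y ^ 2 = 8 / 81 * x ^ 2 - 16 / 81 * x ^ 3 + 8 / 81 * x ^ 4 := by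
  refine ⟨(hasIntervalIntegral_comp_absAsymm_of_two_thirds_le continuous_id h₂ h₃).2.trans ?_,
    (hasIntervalIntegral_comp_absAsymm_of_two_thirds_le (continuous_pow 2) h₂ h₃).2.trans ?_⟩ <;>
  simp (disch := exact (Continuous.intervalIntegrable (by fun_prop) _ _)) only [sub_sq, mul_pow,
    div_pow, mul_sub, integral_add, integral_sub, integral_const_mul_id, integral_const_mul,
    integral_div, integral_const, integral_pow, smul_eq_mul, id] <;>
  ring

theorem integral_integral_absAsymm :
    ∫ x in 0..1, ∫ y in 0..1, absAsymm C23 x y = 10 / 243 ∧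
    ∫ x in 0..1, ∫ y in 0..1, absAsymm C23 x y ^ 2 = 296 / 98415 := by
  have I₁ (x : ℝ) (hx : x ∈ Icc (0 : ℝ) (4 / 9)) := integral_absAsymm_of_le_four_ninths hx.1 hx.2
  have I₂ (x : ℝ) (hx : x ∈ Icc (4 / 9 : ℝ) (2 / 3)) :=
    integral_absAsymm_of_four_ninths_le hx.1 hx.2
  have I₃ (x : ℝ) (hx : x ∈ Icc (2 / 3 : ℝ) 1) := integral_absAsymm_of_two_thirds_le hx.1 hx.2
  refine ⟨(((of_eqOn_Icc (by norm_num) (by fun_prop) fun x hx => (I₁ x hx).1).trans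
      (of_eqOn_Icc (by norm_num) (by fun_prop) fun x hx => (I₂ x hx).1)).trans
      (of_eqOn_Icc (by norm_num) (by fun_prop) fun x hx => (I₃ x hx).1)).2.trans ?_,
    (((of_eqOn_Icc (by norm_num) (by fun_prop) fun x hx => (I₁ x hx).2).trans
      (of_eqOn_Icc (by norm_num) (by fun_prop) fun x hx => (I₂ x hx).2)).trans
      (of_eqOn_Icc (by norm_num) (by fun_prop) fun x hx => (I₃ x hx).2)).2.trans ?_⟩ <;>
  simp (disch := exact (Continuous.intervalIntegrable (by fun_prop) _ _)) only [integral_add,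
    integral_sub, integral_const_mul_id, integral_const_mul, integral_pow] <;>
  norm_num

end C23

/-- Example 4.7: `μ₁(C_{2/3}) = 10/243` and
`μ₂(C_{2/3}) = (2/81)√(74/15)`. -/
theorem C23_mu_one_and_mu_two :
    (∫ x in (0:ℝ)..1, ∫ y in (0:ℝ)..1, |C23 x y - C23 y x|) = 10 / 243 ∧
    Real.sqrt (∫ x in (0:ℝ)..1, ∫ y in (0:ℝ)..1, |C23 x y - C23 y x| ^ 2) =
      (2 / 81) * Real.sqrt (74 / 15) := by
  obtain ⟨h₁, h₂⟩ := C23.integral_integral_absAsymm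
  refine ⟨h₁, ?_⟩
  rw [show (∫ x in (0:ℝ)..1, ∫ y in (0:ℝ)..1, |C23 x y - C23 y x| ^ 2) = (2 / 81) ^ 2 * (74 / 15)
    from h₂.trans (by norm_num), Real.sqrt_mul (by positivity), Real.sqrt_sq (by norm_num)]
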